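/- Let p ≥ 3 be a prime and let n ≥ 3 be a natural number. Then there exists a p-progression-free subset S of F_p^n with |S| ≥ (p-1)^n + ((n-2)/2)·(p-1)·(p-2)^{n-3} (note that (p-1)/2 is an integer since p is odd). -/

import Mathlib

/-!
Write a point of `F_p^n ≅ (F_p × F_p) × F_p^(n-2)` as `((f, g), y)` and fix a half system `D` of
`F_p^×` (`0 ∉ D`, `D ∩ -D = ∅`, `2 |D| = p - 1`). The points with all coordinates nonzero contain no
line, since a nonconstant coordinate of a line vanishes somewhere. Remove those with `f = g` and
some `y i = 1`, add as many points `((0, g), y)` and `((g, 0), y)` with `g ∈ D`, `y` nonzero and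
some `y i = 1`, and gain the points `((-c, -c), y)` with `c ∈ D` and `y` having one zero coordinate
and no other coordinate in `{0, 1}`: there are `|D| (n - 2) (p - 2)^(n - 3)` of them. A line in the
new set is excluded by following where its coordinates vanish: a zero of a middle coordinate forces
`f = g` with `-f ∈ D`, a zero of `f` or `g` forces the other one into `D` and some middle coordinate
to be `1`, and `D ∩ -D = ∅` makes these constraints incompatible.
-/

/-- A subset `S` of `F_p^n` is `k`-progression-free if there are no `a, d` with `d ≠ 0`
such that `a + i • d ∈ S` for all `i ∈ {0, …, k-1}`. -/
def ProgFree (p n k : ℕ) (S : Finset (Fin n → ZMod p)) : Prop :=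
  ¬ ∃ a d : Fin n → ZMod p, d ≠ 0 ∧ ∀ i : ℕ, i < k → a + (i : ZMod p) • d ∈ S

open Finset Fintype

section ContainsLine

variable (K : Type*) {V W : Type*} [Semiring K] [AddCommMonoid V] [Module K V]
  [AddCommMonoid W] [Module K W]

def ContainsLine (s : Set V) : Prop :=
  ∃ a d : V, d ≠ 0 ∧ ∀ t : K, a + t • d ∈ s

variable {K}

theorem ContainsLine.of_preimage {s : Set W} {f : V →ₗ[K] W} (hf : Function.Injective f)
    (h : ContainsLine K (f ⁻¹' s)) : ContainsLine K s := by
  obtain ⟨a, d, hd, had⟩ := h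
  exact ⟨f a, f d, (map_ne_zero_iff f hf).2 hd, fun t => by simpa using had t⟩

theorem ContainsLine.mono {s t : Set V} (hst : s ⊆ t) (h : ContainsLine K s) :
    ContainsLine K t := by
  obtain ⟨a, d, hd, had⟩ := h
  exact ⟨a, d, hd, fun u => hst (had u)⟩

theorem progFree_of_not_containsLine {p n : ℕ} [NeZero p] {S : Finset (Fin n → ZMod p)}
    (h : ¬ ContainsLine (ZMod p) (S : Set (Fin n → ZMod p))) : ProgFree p n p S := by
  rintro ⟨a, d, hd, had⟩
  exact h ⟨a, d, hd, fun t => by simpa using had t.val t.val_lt⟩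

end ContainsLine

section Admissible

variable {K ι : Type*} [Field K]

theorem exists_add_mul_eq {β : K} (hβ : β ≠ 0) (α v : K) : ∃ t, α + t * β = v :=
  ⟨(v - α) / β, by field_simp; ring⟩

theorem add_mul_left_injective (α : K) {β : K} (hβ : β ≠ 0) :
    Function.Injective fun t => α + t * β :=
  (add_right_injective α).comp (mul_left_injective₀ hβ)

-- The conditions on the points of `lineFreeSet ι D` below that exclude lines; in fact they
-- characterise these points.
structure Admissible (D : Finset K) (f g : K) (y : ι → K) : Prop where
  left_eq_zero : f = 0 → g ∈ D ∧ (∀ i, y i ≠ 0) ∧ ∃ i, y i = 1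
  right_eq_zero : g = 0 → f ∈ D ∧ (∀ i, y i ≠ 0) ∧ ∃ i, y i = 1
  mid_eq_zero : ∀ j, y j = 0 → f = g ∧ -f ∈ D ∧ ∀ i ≠ j, y i ≠ 0 ∧ y i ≠ 1
  diag_ne_one : f = g → f ≠ 0 → (∀ i, y i ≠ 0) → ∀ i, y i ≠ 1

variable {D : Finset K} {f g : K} {y : ι → K}

theorem Admissible.symm (h : Admissible D f g y) : Admissible D g f y where
  left_eq_zero := h.right_eq_zero
  right_eq_zero := h.left_eq_zero
  mid_eq_zero j hj := by
    obtain ⟨hfg, hf, hy⟩ := h.mid_eq_zero j hj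
    exact ⟨hfg.symm, hfg ▸ hf, hy⟩
  diag_ne_one hgf hg := h.diag_ne_one hgf.symm (hgf ▸ hg)

theorem Admissible.ne_zero_of_eq (h : Admissible D f g y) (hD0 : 0 ∉ D) (hfg : f = g) :
    f ≠ 0 :=
  fun hf => hD0 (by simpa [← hfg, hf] using (h.left_eq_zero hf).1)

theorem Admissible.ne_one_of_eq (h : Admissible D f g y) (hD0 : 0 ∉ D) (hfg : f = g) (j : ι) :
    y j ≠ 1 := by
  intro hj
  refine h.diag_ne_one hfg (h.ne_zero_of_eq hD0 hfg) (fun i hi => ?_) j hj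
  have hji : j ≠ i := by rintro rfl; exact one_ne_zero (hj.symm.trans hi)
  exact ((h.mid_eq_zero i hi).2.2 j hji).2 hj

section AffineLine

variable {α₁ β₁ α₂ β₂ : K} {α β : ι → K}

theorem false_of_mid_const (hD0 : 0 ∉ D) (hDneg : ∀ c ∈ D, -c ∉ D) (hβ : β₁ ≠ 0 ∨ β₂ ≠ 0)
    (H : ∀ t, Admissible D (α₁ + t * β₁) (α₂ + t * β₂) y) : False := by
  obtain ⟨i, hi⟩ : ∃ i, y i = 1 := by
    rcases hβ with hβ | hβ
    · obtain ⟨t, ht⟩ := exists_add_mul_eq hβ α₁ 0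
      exact ((H t).left_eq_zero ht).2.2
    · obtain ⟨t, ht⟩ := exists_add_mul_eq hβ α₂ 0
      exact ((H t).right_eq_zero ht).2.2
  rcases ne_or_eq β₁ β₂ with hne | heq
  · obtain ⟨s, hs⟩ := exists_add_mul_eq (sub_ne_zero.2 hne) (α₁ - α₂) 0
    exact (H s).ne_one_of_eq hD0 (by linear_combination hs) i hi
  -- the line is parallel to the diagonal, so it meets the two axes at `(c, 0)` and `(0, -c)`
  · have hβ₁ : β₁ ≠ 0 := by rcases hβ with hβ | hβ <;> simp_all
    obtain ⟨t₁, ht₁⟩ := exists_add_mul_eq hβ₁ α₁ 0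
    obtain ⟨t₂, ht₂⟩ := exists_add_mul_eq (heq ▸ hβ₁) α₂ 0
    refine hDneg _ ((H t₂).right_eq_zero ht₂).1 ?_
    convert ((H t₁).left_eq_zero ht₁).1 using 1
    linear_combination -ht₁ - ht₂ + (t₁ - t₂) * heq

theorem mid_slope_eq_zero
    (H : ∀ t, Admissible D (α₁ + t * β₁) (α₂ + t * β₂) (fun i => α i + t * β i))
    (hne : β₁ ≠ β₂) {j : ι} (hj : β j ≠ 0) {i : ι} (hij : i ≠ j) : β i = 0 := by
  by_contra hi
  obtain ⟨tj, htj⟩ := exists_add_mul_eq hj (α j) 0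
  obtain ⟨ti, hti⟩ := exists_add_mul_eq hi (α i) 0
  obtain ⟨hfgj, -, hother⟩ := (H tj).mid_eq_zero j htj
  have hfgi := ((H ti).mid_eq_zero i hti).1
  have : ti = tj := add_mul_left_injective (α₁ - α₂) (sub_ne_zero.2 hne) <| by
    linear_combination hfgi - hfgj
  exact (hother i hij).1 (this ▸ hti)

theorem false_of_mid_moving_of_right_moving (hD0 : 0 ∉ D) (hDneg : ∀ c ∈ D, -c ∉ D)
    (H : ∀ t, Admissible D (α₁ + t * β₁) (α₂ + t * β₂) (fun i => α i + t * β i))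
    (hne : β₁ ≠ β₂) (hβ₂ : β₂ ≠ 0) {j : ι} (hj : β j ≠ 0) : False := by
  obtain ⟨tj, htj⟩ := exists_add_mul_eq hj (α j) 0
  obtain ⟨hfg, hDf, hother⟩ := (H tj).mid_eq_zero j htj
  -- only `y j` moves, and the other middle coordinates avoid `1` at `tj`
  have hone : ∀ t, (∃ i, α i + t * β i = 1) → α j + t * β j = 1 := by
    rintro t ⟨i, hi⟩
    obtain rfl | hij := eq_or_ne i j
    · exact hi
    · have hβi := mid_slope_eq_zero H hne hj hij
      exact absurd (by simpa [hβi] using hi) (hother i hij).2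
  obtain ⟨t₂, ht₂⟩ := exists_add_mul_eq hβ₂ α₂ 0
  obtain ⟨hD₂, -, hone₂⟩ := (H t₂).right_eq_zero ht₂
  rcases eq_or_ne β₁ 0 with hβ₁ | hβ₁
  · exact hDneg _ hD₂ (by simpa [hβ₁] using hDf)
  · obtain ⟨t₁, ht₁⟩ := exists_add_mul_eq hβ₁ α₁ 0
    obtain ⟨hD₁, -, hone₁⟩ := (H t₁).left_eq_zero ht₁
    have : t₁ = t₂ :=
      add_mul_left_injective (α j) hj <| (hone t₁ hone₁).trans (hone t₂ hone₂).symm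
    exact hD0 (by rwa [this, ht₂] at hD₁)

theorem false_of_mid_moving (hD0 : 0 ∉ D) (hDneg : ∀ c ∈ D, -c ∉ D)
    (H : ∀ t, Admissible D (α₁ + t * β₁) (α₂ + t * β₂) (fun i => α i + t * β i))
    {j : ι} (hj : β j ≠ 0) : False := by
  rcases ne_or_eq β₁ β₂ with hne | heq
  · rcases ne_or_eq β₂ 0 with hβ₂ | hβ₂
    · exact false_of_mid_moving_of_right_moving hD0 hDneg H hne hβ₂ hj
    · exact false_of_mid_moving_of_right_moving hD0 hDneg (fun t => (H t).symm) hne.symm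
        (by rwa [hβ₂] at hne) hj
  -- `f - g` is constant and vanishes at `tj`, so `f = g` all along the line
  · obtain ⟨tj, htj⟩ := exists_add_mul_eq hj (α j) 0
    obtain ⟨s, hs⟩ := exists_add_mul_eq hj (α j) 1
    have hfg := ((H tj).mid_eq_zero j htj).1
    exact (H s).ne_one_of_eq hD0 (by linear_combination hfg + (s - tj) * heq) j hs

end AffineLine

theorem not_containsLine_setOf_admissible (hD0 : 0 ∉ D) (hDneg : ∀ c ∈ D, -c ∉ D) :
    ¬ ContainsLine K {x : (K × K) × (ι → K) | Admissible D x.1.1 x.1.2 x.2} := by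
  rintro ⟨a, d, hd, had⟩
  have H : ∀ t : K, Admissible D (a.1.1 + t * d.1.1) (a.1.2 + t * d.1.2)
      (fun i => a.2 i + t * d.2 i) := had
  by_cases hmid : ∃ j, d.2 j ≠ 0
  · obtain ⟨j, hj⟩ := hmid
    exact false_of_mid_moving hD0 hDneg H hj
  · push Not at hmid
    refine false_of_mid_const (y := a.2) hD0 hDneg ?_ (fun t => by simpa [hmid] using H t)
    by_contra! h
    exact hd (Prod.ext (Prod.ext h.1 h.2) (funext hmid))

section Counting

variable [Fintype K] [DecidableEq K] [Fintype ι] [DecidableEq ι]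

variable (K ι) in
def nonzeroVecs : Finset (ι → K) := piFinset fun _ => univ.erase 0

variable (K ι) in
def nonzeroVecsWithOne : Finset (ι → K) := (nonzeroVecs K ι).filter fun y => ∃ i, y i = 1

variable (K ι) in
def singleZeroVecs : Finset (ι → K) :=
  univ.biUnion fun j => piFinset fun i => if i = j then {0} else (univ.erase 0).erase 1

theorem card_nonzeroVecs : #(nonzeroVecs K ι) = (card K - 1) ^ card ι := by
  simp [nonzeroVecs, card_univ]

theorem card_singleZeroVecs :
    #(singleZeroVecs K ι) = card ι * (card K - 2) ^ (card ι - 1) := by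
  rw [singleZeroVecs, card_biUnion]
  · have hpiece : ∀ j : ι,
        #(piFinset fun i => if i = j then ({0} : Finset K) else (univ.erase 0).erase 1) =
          (card K - 2) ^ (card ι - 1) := by
      intro j
      rw [card_piFinset, ← mul_prod_erase univ _ (mem_univ j), if_pos rfl, card_singleton, one_mul,
        Finset.prod_congr rfl fun i hi => by rw [if_neg (ne_of_mem_erase hi)], prod_const,
        card_erase_of_mem (mem_univ j), card_erase_of_mem (mem_erase.2 ⟨one_ne_zero, mem_univ 1⟩),
        card_erase_of_mem (mem_univ 0), card_univ, card_univ, Nat.sub_sub]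
    simp [hpiece]
  · intro j _ j' _ hjj'
    simp only [Function.onFun, disjoint_left, mem_piFinset]
    intro y hy hy'
    specialize hy j
    rw [if_pos rfl, mem_singleton] at hy
    simpa [hjj', hy] using hy' j

variable (ι) in
def lineFreeSet (D : Finset K) : Finset ((K × K) × (ι → K)) :=
  (((univ.erase 0 ×ˢ univ.erase 0) ×ˢ nonzeroVecs K ι \
        (univ.erase 0).diag ×ˢ nonzeroVecsWithOne K ι)
    ∪ ({0} ×ˢ D) ×ˢ nonzeroVecsWithOne K ι ∪ (D ×ˢ {0}) ×ˢ nonzeroVecsWithOne K ι)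
    ∪ D.image (fun c => (-c, -c)) ×ˢ singleZeroVecs K ι

theorem admissible_of_mem_lineFreeSet {D : Finset K} (hD0 : 0 ∉ D) {x : (K × K) × (ι → K)}
    (hx : x ∈ lineFreeSet ι D) : Admissible D x.1.1 x.1.2 x.2 := by
  obtain ⟨⟨f, g⟩, y⟩ := x
  simp only [lineFreeSet, nonzeroVecsWithOne, nonzeroVecs, singleZeroVecs, mem_union, mem_sdiff,
    mem_product, mem_diag, mem_filter, mem_piFinset, mem_image, mem_biUnion, mem_erase,
    mem_singleton, mem_univ, and_true, true_and, ne_eq, Prod.mk.injEq] at hx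
  rcases hx with ((⟨⟨⟨hf, hg⟩, hy⟩, hdiag⟩ | ⟨⟨rfl, hg⟩, hy, i, hi⟩) | ⟨⟨hf, rfl⟩, hy, i, hi⟩) |
    ⟨⟨c, hc, rfl, rfl⟩, j, hj⟩
  · exact ⟨fun h => (hf h).elim, fun h => (hg h).elim, fun j hj => (hy j hj).elim,
      fun hfg _ _ i hi => hdiag ⟨⟨hf, hfg⟩, hy, i, hi⟩⟩
  · exact ⟨fun _ => ⟨hg, hy, i, hi⟩, fun h => (hD0 (h ▸ hg)).elim, fun j hj => (hy j hj).elim,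
      fun _ h => (h rfl).elim⟩
  · exact ⟨fun h => (hD0 (h ▸ hf)).elim, fun _ => ⟨hf, hy, i, hi⟩, fun j hj => (hy j hj).elim,
      fun h h' => (h' h).elim⟩
  · have hyj : y j = 0 := by simpa using hj j
    have hy : ∀ i ≠ j, y i ≠ 0 ∧ y i ≠ 1 := fun i hi => by simpa [hi, and_comm] using hj i
    have hc0 : -c ≠ 0 := neg_ne_zero.2 fun h => hD0 (h ▸ hc)
    refine ⟨fun h => (hc0 h).elim, fun h => (hc0 h).elim, fun j' hj' => ?_,
      fun _ _ hy0 => (hy0 j hyj).elim⟩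
    obtain rfl : j' = j := by_contra fun h => (hy j' h).1 hj'
    exact ⟨rfl, by simpa using hc, hy⟩

theorem card_lineFreeSet {D : Finset K} (hD0 : 0 ∉ D) (hD : 2 * #D = card K - 1) :
    #(lineFreeSet ι D) =
      (card K - 1) ^ (card ι + 2) + #D * (card ι * (card K - 2) ^ (card ι - 1)) := by
  have hnz : #(univ.erase (0 : K)) = card K - 1 := by
    rw [card_erase_of_mem (mem_univ _), card_univ]
  have hsub : nonzeroVecsWithOne K ι ⊆ nonzeroVecs K ι := filter_subset _ _
  have hdiag : (univ.erase (0 : K)).diag ×ˢ nonzeroVecsWithOne K ι ⊆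
      (univ.erase 0 ×ˢ univ.erase 0) ×ˢ nonzeroVecs K ι :=
    product_subset_product (fun x hx => by
      obtain ⟨hx, hx'⟩ := mem_diag.1 hx
      exact mem_product.2 ⟨hx, hx' ▸ hx⟩) hsub
  have hle := card_le_card hdiag
  rw [lineFreeSet, card_union_of_disjoint, card_union_of_disjoint, card_union_of_disjoint,
    card_sdiff_of_subset hdiag]
  · simp only [card_product, diag_card, card_singleton, hnz, card_nonzeroVecs, card_singleZeroVecs,
      card_image_of_injective _ fun a b h => neg_injective (Prod.mk.inj h).1] at hle ⊢
    generalize #(nonzeroVecsWithOne K ι) = a at hle ⊢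
    have hsplit : (card K - 1) * a = 1 * #D * a + #D * 1 * a := by rw [← hD]; ring
    have hpow : (card K - 1) * (card K - 1) * (card K - 1) ^ card ι =
        (card K - 1) ^ (card ι + 2) := by ring
    omega
  all_goals
    rw [disjoint_left]
    rintro ⟨⟨f, g⟩, y⟩ hx hx'
    simp only [nonzeroVecsWithOne, nonzeroVecs, singleZeroVecs, mem_union, mem_sdiff,
      mem_product, mem_diag, mem_filter, mem_piFinset, mem_image, mem_biUnion, mem_erase,
      mem_singleton, mem_univ, and_true, true_and, ne_eq, Prod.mk.injEq] at hx hx'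
  · aesop
  · aesop
  · obtain ⟨-, j, hj⟩ := hx'
    have : y j ≠ 0 := by rcases hx with (h | h) | h <;> simp_all
    exact this (by simpa using hj j)

end Counting

end Admissible

theorem exists_halfSystem {p : ℕ} (hp : Odd p) :
    ∃ D : Finset (ZMod p), 0 ∉ D ∧ (∀ c ∈ D, -c ∉ D) ∧ 2 * #D = p - 1 := by
  obtain ⟨k, rfl⟩ := hp
  have hcast : ∀ v, 0 < v → v < 2 * k + 1 → (v : ZMod (2 * k + 1)) ≠ 0 := fun v hv hvp h =>
    Nat.not_dvd_of_pos_of_lt hv hvp ((ZMod.natCast_eq_zero_iff v _).1 h)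
  refine ⟨(Icc 1 k).image Nat.cast, ?_, ?_, ?_⟩
  · simp only [mem_image, mem_Icc, not_exists, not_and, and_imp]
    exact fun v hv1 hv2 => hcast v hv1 (by omega)
  · simp only [mem_image, mem_Icc, forall_exists_index, and_imp, not_exists, not_and]
    rintro _ v hv1 hv2 rfl w hw1 hw2 hvw
    refine hcast (w + v) (by omega) (by omega) ?_
    push_cast
    rw [hvw, neg_add_cancel]
  · rw [card_image_of_injOn, Nat.card_Icc]
    · omega
    · intro v hv w hw hvw
      simp only [coe_Icc, Set.mem_Icc] at hv hw
      rwa [ZMod.natCast_eq_natCast_iff', Nat.mod_eq_of_lt (by omega),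
        Nat.mod_eq_of_lt (by omega)] at hvw

theorem exists_progFree_card_eq {p n : ℕ} [Fact p.Prime] (hp2 : p ≠ 2) (hn : 2 ≤ n) :
    ∃ S : Finset (Fin n → ZMod p), ProgFree p n p S ∧
      #S = (p - 1) ^ n + (p - 1) / 2 * ((n - 2) * (p - 2) ^ (n - 3)) := by
  obtain ⟨D, hD0, hDneg, hD⟩ := exists_halfSystem ((Fact.out : p.Prime).odd_of_ne_two hp2)
  let e : (Fin n → ZMod p) ≃ₗ[ZMod p] (ZMod p × ZMod p) × (Fin (n - 2) → ZMod p) :=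
    LinearEquiv.ofFinrankEq _ _ (by simp; omega)
  refine ⟨(lineFreeSet (Fin (n - 2)) D).map e.symm.toEquiv.toEmbedding,
    progFree_of_not_containsLine fun h => ?_, ?_⟩
  · refine not_containsLine_setOf_admissible hD0 hDneg <|
      (ContainsLine.of_preimage e.injective ?_).mono fun _ => admissible_of_mem_lineFreeSet hD0
    simpa [coe_map, ← e.image_symm_eq_preimage] using h
  · rw [card_map, card_lineFreeSet hD0 (by rw [hD, ZMod.card]), ZMod.card, Fintype.card_fin,
      show n - 2 + 2 = n by omega, show n - 2 - 1 = n - 3 by omega, show #D = (p - 1) / 2 by omega]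

theorem stmt_8 (p n : ℕ) (hp : p.Prime) (hp3 : 3 ≤ p) (hn : 3 ≤ n) :
    ∃ S : Finset (Fin n → ZMod p), ProgFree p n p S ∧
      ((p : ℝ) - 1) ^ n + (((n : ℝ) - 2) / 2) * ((p : ℝ) - 1) * ((p : ℝ) - 2) ^ (n - 3)
        ≤ (S.card : ℝ) := by
  have : Fact p.Prime := ⟨hp⟩
  obtain ⟨S, hS, hcard⟩ := exists_progFree_card_eq (p := p) (by omega) (by omega : 2 ≤ n)
  refine ⟨S, hS, le_of_eq ?_⟩
  have hdvd : 2 ∣ p - 1 := by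
    obtain ⟨k, rfl⟩ := hp.odd_of_ne_two (by omega)
    omega
  rw [hcard]
  push_cast [Nat.cast_div_charZero hdvd, Nat.cast_sub (by omega : 1 ≤ p),
    Nat.cast_sub (by omega : 2 ≤ p), Nat.cast_sub (by omega : 2 ≤ n)]
  ring
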